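/- arXiv:2310.15616 — 2 statements merged into one kernel-verified Lean document; each statement's English description precedes it below -/
import Mathlib

section
/- If v ∈ Lᵖ satisfies v ≥ 0 a.e., v ≠ 0 and T v = λ v for some real λ, then the set supp(v) is T-invariant. -/
open MeasureTheory ENNReal Filter Set

noncomputable section

namespace PaperAtoms

variable {Ω : Type*} [MeasurableSpace Ω] {μ : MeasureTheory.Measure Ω} {p : ℝ≥0∞} [Fact (1 ≤ p)]

/-- `T` is a positive operator on `Lp`. -/
def IsPositiveOp (T : Lp ℝ p μ →L[ℝ] Lp ℝ p μ) : Prop :=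
  ∀ f : Lp ℝ p μ, 0 ≤ f → 0 ≤ T f

/-- A measurable set `A` is `T`-invariant if `T f` vanishes a.e. on `Aᶜ` for every
nonnegative `f ∈ Lp` vanishing a.e. on `Aᶜ`. -/
def Invariant (T : Lp ℝ p μ →L[ℝ] Lp ℝ p μ) (A : Set Ω) : Prop :=
  MeasurableSet A ∧
    ∀ f : Lp ℝ p μ, 0 ≤ f → (∀ᵐ x ∂μ, x ∉ A → f x = 0) → ∀ᵐ x ∂μ, x ∉ A → T f x = 0

/-- `A` is `T`-co-invariant if `Aᶜ` is `T`-invariant. -/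
def CoInvariant (T : Lp ℝ p μ →L[ℝ] Lp ℝ p μ) (A : Set Ω) : Prop :=
  Invariant T Aᶜ

/-- `A` is `T`-admissible if it belongs to the σ-field generated by the `T`-invariant sets. -/
def Admissible (T : Lp ℝ p μ →L[ℝ] Lp ℝ p μ) (A : Set Ω) : Prop :=
  MeasurableSet[MeasurableSpace.generateFrom {B : Set Ω | Invariant T B}] A

/-- A `T`-atom is a minimal `T`-admissible set with positive measure. -/
def Atom (T : Lp ℝ p μ →L[ℝ] Lp ℝ p μ) (A : Set Ω) : Prop :=
  Admissible T A ∧ 0 < μ A ∧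
    ∀ B : Set Ω, Admissible T B → B ≤ᵐ[μ] A → μ B = 0 ∨ B =ᵐ[μ] A

/-- `FA` is (a version of) the future of `A`: the minimal `T`-invariant set containing `A` a.e. -/
def IsFuture (T : Lp ℝ p μ →L[ℝ] Lp ℝ p μ) (A FA : Set Ω) : Prop :=
  Invariant T FA ∧ A ≤ᵐ[μ] FA ∧
    ∀ B : Set Ω, Invariant T B → A ≤ᵐ[μ] B → FA ≤ᵐ[μ] B

/-- `PA` is (a version of) the past of `A`: the minimal `T`-co-invariant set containing `A` a.e. -/
def IsPast (T : Lp ℝ p μ →L[ℝ] Lp ℝ p μ) (A PA : Set Ω) : Prop :=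
  CoInvariant T PA ∧ A ≤ᵐ[μ] PA ∧
    ∀ B : Set Ω, CoInvariant T B → A ≤ᵐ[μ] B → PA ≤ᵐ[μ] B

/-- `A` is `T`-convex if `A = F(A) ∩ P(A)` a.e. -/
def Convexe (T : Lp ℝ p μ →L[ℝ] Lp ℝ p μ) (A : Set Ω) : Prop :=
  MeasurableSet A ∧
    ∃ FA PA : Set Ω, IsFuture T A FA ∧ IsPast T A PA ∧ A =ᵐ[μ] (FA ∩ PA : Set Ω)

/-- Multiplication by the indicator function of `A`, as a bounded operator on `Lp`
(defined as `0` if `A` is not measurable). -/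
def indicatorCLM (μ : MeasureTheory.Measure Ω) (p : ℝ≥0∞) [Fact (1 ≤ p)] (A : Set Ω) :
    Lp ℝ p μ →L[ℝ] Lp ℝ p μ := by
  classical
  exact if hA : MeasurableSet A then
    LinearMap.mkContinuous
      { toFun := fun f => ((Lp.memLp f).indicator hA).toLp (A.indicator f)
        map_add' := fun f g => by
          rw [← MemLp.toLp_add]
          refine MemLp.toLp_congr _ _ ?_
          filter_upwards [Lp.coeFn_add f g] with x hx
          simp only [Pi.add_apply, Set.indicator_apply, hx]
          split <;> simp
        map_smul' := fun c f => by
          rw [RingHom.id_apply, ← MemLp.toLp_const_smul]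
          refine MemLp.toLp_congr _ _ ?_
          filter_upwards [Lp.coeFn_smul c f] with x hx
          simp only [Pi.smul_apply, Set.indicator_apply, hx, smul_eq_mul]
          split <;> simp }
      1
      (fun f => by
        simp only [LinearMap.coe_mk, AddHom.coe_mk, one_mul]
        rw [Lp.norm_toLp, Lp.norm_def]
        exact ENNReal.toReal_mono (Lp.eLpNorm_ne_top f) (eLpNorm_indicator_le _))
  else 0

/-- The restriction `T_A = 1_A T 1_A` of `T` to a measurable set `A`. -/
def restrictOp (T : Lp ℝ p μ →L[ℝ] Lp ℝ p μ) (A : Set Ω) : Lp ℝ p μ →L[ℝ] Lp ℝ p μ :=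
  (indicatorCLM μ p A).comp (T.comp (indicatorCLM μ p A))

/-- The spectral radius of a bounded operator, via Gelfand's formula
`ρ(T) = inf_n ‖Tⁿ‖^(1/n) = lim_n ‖Tⁿ‖^(1/n)`. -/
def specRadius (T : Lp ℝ p μ →L[ℝ] Lp ℝ p μ) : ℝ :=
  ⨅ n : ℕ, ‖T ^ (n + 1)‖ ^ (((n : ℝ) + 1)⁻¹)

/-- The spectral radius `ρ(A)` of the restriction of `T` to `A`. -/
def rhoSet (T : Lp ℝ p μ →L[ℝ] Lp ℝ p μ) (A : Set Ω) : ℝ :=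
  specRadius (restrictOp T A)

/-- A measurable set `A` with `μ A > 0` is `T`-irreducible if the restriction of `T` to `A`
is irreducible, i.e. every `T_A`-invariant subset of `A` is a.e. trivial. -/
def Irreducible (T : Lp ℝ p μ →L[ℝ] Lp ℝ p μ) (A : Set Ω) : Prop :=
  MeasurableSet A ∧ 0 < μ A ∧
    ∀ B : Set Ω, Invariant (restrictOp T A) B → B ≤ᵐ[μ] A → μ B = 0 ∨ B =ᵐ[μ] A

/-- `T` is power compact if some power `T^k`, `k ≥ 1`, is a compact operator. -/
def PowerCompact (T : Lp ℝ p μ →L[ℝ] Lp ℝ p μ) : Prop :=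
  ∃ k : ℕ, 1 ≤ k ∧ IsCompactOperator (⇑(T ^ k))

/-- `B ≼ A` for atoms: `B ⊆ F(A)` a.e. -/
def Prec (T : Lp ℝ p μ →L[ℝ] Lp ℝ p μ) (B A : Set Ω) : Prop :=
  ∃ FA : Set Ω, IsFuture T A FA ∧ B ≤ᵐ[μ] FA

/-- `B ≺ A` for atoms: `B ⊆ F(A)` a.e. and `B ≠ A` a.e. -/
def PrecStrict (T : Lp ℝ p μ →L[ℝ] Lp ℝ p μ) (B A : Set Ω) : Prop :=
  Prec T B A ∧ ¬ (B =ᵐ[μ] A)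

/-- A critical atom: a `T`-atom whose spectral radius equals that of `T`. -/
def CriticalAtom (T : Lp ℝ p μ →L[ℝ] Lp ℝ p μ) (A : Set Ω) : Prop :=
  Atom T A ∧ rhoSet T A = specRadius T

/-- There is a chain `A = A_0 ≻ A_1 ≻ ⋯ ≻ A_n` of critical atoms starting at `A`. -/
def ChainFrom (T : Lp ℝ p μ →L[ℝ] Lp ℝ p μ) (A : Set Ω) (n : ℕ) : Prop :=
  ∃ c : ℕ → Set Ω, c 0 = A ∧ (∀ i ≤ n, CriticalAtom T (c i)) ∧
    ∀ i < n, PrecStrict T (c (i + 1)) (c i)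

/-- The generalized eigenspace `⋃ₖ ker (T - λ id)^k` of `T` at `λ`. -/
def genEigenspace (T : Lp ℝ p μ →L[ℝ] Lp ℝ p μ) (l : ℝ) : Submodule ℝ (Lp ℝ p μ) :=
  ⨆ k : ℕ, LinearMap.ker (((T - l • (1 : Lp ℝ p μ →L[ℝ] Lp ℝ p μ)) ^ k : Lp ℝ p μ →L[ℝ] Lp ℝ p μ) : Lp ℝ p μ →ₗ[ℝ] Lp ℝ p μ)

/-- The algebraic multiplicity of `λ` for `T`. -/
def algMult (T : Lp ℝ p μ →L[ℝ] Lp ℝ p μ) (l : ℝ) : ℕ :=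
  Module.finrank ℝ ↥(genEigenspace T l)

/-- The set of `k` at which the kernels of `(T - ρ(T) id)^k` stabilize; the ascent of `T`
at `ρ(T)` is its infimum. -/
def ascentSet (T : Lp ℝ p μ →L[ℝ] Lp ℝ p μ) : Set ℕ :=
  {k : ℕ | LinearMap.ker (((T - specRadius T • (1 : Lp ℝ p μ →L[ℝ] Lp ℝ p μ)) ^ k : Lp ℝ p μ →L[ℝ] Lp ℝ p μ) : Lp ℝ p μ →ₗ[ℝ] Lp ℝ p μ)
      = LinearMap.ker (((T - specRadius T • (1 : Lp ℝ p μ →L[ℝ] Lp ℝ p μ)) ^ (k + 1) : Lp ℝ p μ →L[ℝ] Lp ℝ p μ) : Lp ℝ p μ →ₗ[ℝ] Lp ℝ p μ)}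

/-- `D` is (a version of) the set `T(C)`, i.e. the support of `T(1_C f)` for any a.e.
positive `f ∈ Lp`. -/
def IsImage (T : Lp ℝ p μ →L[ℝ] Lp ℝ p μ) (C D : Set Ω) : Prop :=
  MeasurableSet C ∧ MeasurableSet D ∧
    ∀ f : Lp ℝ p μ, (∀ᵐ x ∂μ, 0 < f x) →
      D =ᵐ[μ] ({x | T (indicatorCLM μ p C f) x ≠ 0} : Set Ω)

/-- `D` is (a version of) the `k`-fold iterated image `T^k(C)`. -/
def IsIterImage (T : Lp ℝ p μ →L[ℝ] Lp ℝ p μ) : ℕ → Set Ω → Set Ω → Prop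
  | 0, C, D => D = C
  | (k + 1), C, D => ∃ E : Set Ω, IsIterImage T k C E ∧ IsImage T E D

/-!
The truncations `f ⊓ n • v` of a nonnegative `f` vanishing off `supp v` are dominated by
`n • v`, so by positivity `0 ≤ T (f ⊓ n • v) ≤ n • T v = n λ • v` and each `T (f ⊓ n • v)`
vanishes off `supp v`. Since `p < ∞`, dominated convergence gives `f ⊓ n • v → f` in `Lp`, and
vanishing a.e. on a fixed set is a closed condition in `Lp`, so `T f` vanishes off `supp v` too.
-/

variable {Ω : Type*} [MeasurableSpace Ω] {μ : MeasureTheory.Measure Ω} {p : ℝ≥0∞}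

open scoped Topology

theorem abs_min_sub_self_le_abs {a c : ℝ} (hc : 0 ≤ c) : |min a c - a| ≤ |a| := by
  rw [abs_le]
  constructor <;> cases min_cases a c <;> linarith [le_abs_self a, neg_abs_le a]

theorem eventually_min_natCast_mul_eq {a b : ℝ} (hb : 0 ≤ b) (hab : b = 0 → a = 0) :
    ∀ᶠ n : ℕ in atTop, min a (n * b) = a := by
  rcases hb.eq_or_lt with hb0 | hb_pos
  · exact Eventually.of_forall fun n => by simp [← hb0, hab hb0.symm]
  · filter_upwards [(tendsto_natCast_atTop_atTop.atTop_mul_const hb_pos).eventually_ge_atTop a]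
      with n hn
    exact min_eq_left hn

theorem Lp.tendsto_of_dominated_of_ae_tendsto {E : Type*} [NormedAddCommGroup E] [Fact (1 ≤ p)]
    (hp : p ≠ ∞) {g : ℕ → Lp E p μ} {f : Lp E p μ} {bound : Ω → ℝ} (hbound : MemLp bound p μ)
    (h_le : ∀ n, ∀ᵐ x ∂μ, ‖g n x - f x‖ ≤ bound x)
    (h_lim : ∀ᵐ x ∂μ, Tendsto (fun n => g n x) atTop (𝓝 (f x))) :
    Tendsto g atTop (𝓝 f) := by
  have hp0 : p ≠ 0 := (zero_lt_one.trans_le (Fact.out : 1 ≤ p)).ne'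
  have hp_pos : 0 < p.toReal := ENNReal.toReal_pos hp0 hp
  have h_lint : Tendsto (fun n => ∫⁻ x, ‖g n x - f x‖ₑ ^ p.toReal ∂μ) atTop (𝓝 0) := by
    have h_meas n : Measurable fun x => ‖g n x - f x‖ₑ ^ p.toReal :=
      (continuous_enorm.comp_stronglyMeasurable
        ((Lp.stronglyMeasurable (g n)).sub (Lp.stronglyMeasurable f))).measurable.pow_const _
    have h_dom n : (fun x => ‖g n x - f x‖ₑ ^ p.toReal) ≤ᵐ[μ] fun x => ‖bound x‖ₑ ^ p.toReal := by
      filter_upwards [h_le n] with x hx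
      gcongr
      exact enorm_le_iff_norm_le.2 (hx.trans (le_abs_self _))
    have h_fin : ∫⁻ x, ‖bound x‖ₑ ^ p.toReal ∂μ ≠ ∞ :=
      (lintegral_rpow_enorm_lt_top_of_eLpNorm_lt_top hp0 hp hbound.eLpNorm_lt_top).ne
    have h_pt : ∀ᵐ x ∂μ, Tendsto (fun n => ‖g n x - f x‖ₑ ^ p.toReal) atTop (𝓝 0) := by
      filter_upwards [h_lim] with x hx
      have h_enorm := (tendsto_sub_nhds_zero_iff.2 hx).enorm
      rw [enorm_zero] at h_enorm
      simpa [Function.comp_def, ENNReal.zero_rpow_of_pos hp_pos] using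
        ((ENNReal.continuous_rpow_const (y := p.toReal)).tendsto 0).comp h_enorm
    simpa using tendsto_lintegral_of_dominated_convergence _ h_meas h_dom h_fin h_pt
  rw [Lp.tendsto_Lp_iff_tendsto_eLpNorm']
  simp_rw [eLpNorm_eq_lintegral_rpow_enorm_toReal hp0 hp]
  simpa [Function.comp_def, ENNReal.zero_rpow_of_pos (inv_pos.2 hp_pos)] using
    ((ENNReal.continuous_rpow_const (y := 1 / p.toReal)).tendsto 0).comp h_lint

theorem Lp.tendsto_inf_natCast_smul [Fact (1 ≤ p)] (hp : p ≠ ∞) {f v : Lp ℝ p μ} (hv : 0 ≤ v)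
    (hfv : ∀ᵐ x ∂μ, v x = 0 → f x = 0) :
    Tendsto (fun n : ℕ => f ⊓ (n : ℝ) • v) atTop (𝓝 f) := by
  have h_coe : ∀ᵐ x ∂μ, ∀ n : ℕ, (f ⊓ (n : ℝ) • v) x = min (f x) (n * v x) :=
    ae_all_iff.2 fun n => by
      filter_upwards [Lp.coeFn_inf f ((n : ℝ) • v), Lp.coeFn_smul (n : ℝ) v] with x h_inf h_smul
      rw [h_inf, Pi.inf_apply, h_smul, Pi.smul_apply, smul_eq_mul]
  have hv_ae := (Lp.coeFn_nonneg v).2 hv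
  refine Lp.tendsto_of_dominated_of_ae_tendsto hp (Lp.memLp f).norm (fun n => ?_) ?_
  · filter_upwards [h_coe, hv_ae] with x hx hvx
    rw [hx n, Real.norm_eq_abs, Real.norm_eq_abs]
    exact abs_min_sub_self_le_abs (mul_nonneg n.cast_nonneg hvx)
  · filter_upwards [h_coe, hv_ae, hfv] with x hx hvx hfvx
    exact tendsto_const_nhds.congr'
      ((eventually_min_natCast_mul_eq hvx hfvx).mono fun n hn => ((hx n).trans hn).symm)

theorem Lp.isClosed_setOf_ae_eq_zero_on {E : Type*} [NormedAddCommGroup E] [NormedSpace ℝ E]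
    [Fact (1 ≤ p)] (s : Set Ω) : IsClosed {u : Lp E p μ | ∀ᵐ x ∂μ, x ∈ s → u x = 0} := by
  convert (LpToLpRestrictCLM Ω E ℝ μ p s).isClosed_ker using 1
  ext u
  have h_restrict := LpToLpRestrictCLM_coeFn ℝ s u
  rw [Set.mem_ofPred_eq, SetLike.mem_coe, LinearMap.mem_ker, ContinuousLinearMap.coe_coe,
    Lp.eq_zero_iff_ae_eq_zero,
    ← ae_restrict_iff ((Lp.stronglyMeasurable u).measurableSet_eq_fun stronglyMeasurable_const)]
  exact ⟨h_restrict.trans, h_restrict.symm.trans⟩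

theorem IsPositiveOp.monotone [Fact (1 ≤ p)] {T : Lp ℝ p μ →L[ℝ] Lp ℝ p μ} (hT : IsPositiveOp T) :
    Monotone T := fun f g hfg => by
  simpa using hT (g - f) (sub_nonneg.2 hfg)

theorem Lp.ae_eq_zero_of_nonneg_of_le_smul {u w : Lp ℝ p μ} {c : ℝ} (hu : 0 ≤ u)
    (huw : u ≤ c • w) : ∀ᵐ x ∂μ, w x = 0 → u x = 0 := by
  filter_upwards [(Lp.coeFn_nonneg u).2 hu, (Lp.coeFn_le _ _).2 huw, Lp.coeFn_smul c w]
    with x hux huwx h_smul hwx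
  rw [h_smul, Pi.smul_apply, hwx, smul_zero] at huwx
  exact le_antisymm huwx hux

theorem statement8_general [Fact (1 ≤ p)] (hp' : p ≠ ∞)
    (T : Lp ℝ p μ →L[ℝ] Lp ℝ p μ) (hT : IsPositiveOp T)
    (v : Lp ℝ p μ) (hv0 : 0 ≤ v) (l : ℝ) (hev : T v = l • v) :
    Invariant T ({x | v x ≠ 0}) := by
  refine ⟨((Lp.stronglyMeasurable v).measurableSet_eq_fun stronglyMeasurable_const).compl,
    fun f hf0 hf => ?_⟩
  have hfv : ∀ᵐ x ∂μ, v x = 0 → f x = 0 := hf.mono fun x hx hvx => hx (not_not.2 hvx)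
  have h_trunc (n : ℕ) : ∀ᵐ x ∂μ, x ∈ {x | v x = 0} → T (f ⊓ (n : ℝ) • v) x = 0 := by
    refine Lp.ae_eq_zero_of_nonneg_of_le_smul (c := n * l)
      (hT _ (le_inf hf0 (by rw [Nat.cast_smul_eq_nsmul]; exact nsmul_nonneg hv0 n))) ?_
    calc T (f ⊓ (n : ℝ) • v) ≤ T ((n : ℝ) • v) := hT.monotone inf_le_right
      _ = (n * l) • v := by rw [map_smul, hev, smul_smul]
  have h_lim : ∀ᵐ x ∂μ, x ∈ {x | v x = 0} → T f x = 0 :=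
    (Lp.isClosed_setOf_ae_eq_zero_on _).mem_of_tendsto
      ((T.continuous.tendsto f).comp (Lp.tendsto_inf_natCast_smul hp' hv0 hfv))
      (Eventually.of_forall h_trunc)
  exact h_lim.mono fun x hx hvx => hx (not_not.1 hvx)

theorem statement8 [SigmaFinite μ] (hμ : μ Set.univ ≠ 0) [Fact (1 ≤ p)]
    (hp : 1 < p) (hp' : p ≠ ∞)
    (T : Lp ℝ p μ →L[ℝ] Lp ℝ p μ) (hT : IsPositiveOp T)
    (v : Lp ℝ p μ) (hv0 : 0 ≤ v) (hvne : v ≠ 0) (l : ℝ) (hev : T v = l • v) :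
    Invariant T ({x | v x ≠ 0}) :=
  statement8_general hp' T hT v hv0 l hev

end PaperAtoms
end
end

section
/- If A is a T-irreducible set, then F(A) ∩ P(A) is a T-atom, and it contains A a.e. -/
/-!
Irreducibility of `A` forces every `T`-invariant set `C` to contain `A` or to miss it a.e., since
`C ∩ A` is `T_A`-invariant. In the first case `F(A) ⊆ C`, in the second `P(A) ⊆ Cᶜ`, so
`F(A) ∩ P(A)` lies a.e. on one side of every invariant set, hence of every admissible set, because
the sets with this property form a σ-algebra. An admissible subset of `F(A) ∩ P(A)` is therefore
null or all of it.
-/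

open MeasureTheory ENNReal Filter Set

noncomputable section

namespace PaperAtoms

variable {Ω : Type*} [MeasurableSpace Ω] {μ : MeasureTheory.Measure Ω} {p : ℝ≥0∞} [Fact (1 ≤ p)]

lemma _root_.MeasureTheory.ae_le_or_ae_le_compl_of_measurableSet_generateFrom {α : Type*}
    [MeasurableSpace α] {μ : Measure α} {𝒢 : Set (Set α)} {S : Set α}
    (h𝒢 : ∀ C ∈ 𝒢, S ≤ᵐ[μ] C ∨ S ≤ᵐ[μ] (Cᶜ : Set α)) {B : Set α}
    (hB : MeasurableSet[MeasurableSpace.generateFrom 𝒢] B) : S ≤ᵐ[μ] B ∨ S ≤ᵐ[μ] (Bᶜ : Set α) := by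
  induction B, hB using MeasurableSpace.generateFrom_induction with
  | hC C hC => exact h𝒢 C hC
  | empty => exact .inr (compl_empty (α := α) ▸ (subset_univ S).eventuallyLE)
  | compl t _ ht => simpa only [compl_compl] using ht.symm
  | iUnion s _ hs =>
    by_cases hsome : ∃ n, S ≤ᵐ[μ] s n
    · obtain ⟨n, hn⟩ := hsome
      exact .inl (hn.trans (subset_iUnion s n).eventuallyLE)
    · push Not at hsome
      have hall : ∀ n, S ≤ᵐ[μ] ((s n)ᶜ : Set α) := fun n => (hs n).resolve_left (hsome n)
      right
      simpa only [iInter_const, compl_iUnion] using Filter.EventuallyLE.countable_iInter hall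

lemma indicatorCLM_coeFn {A : Set Ω} (hA : MeasurableSet A) (f : Lp ℝ p μ) :
    ⇑(indicatorCLM μ p A f) =ᵐ[μ] A.indicator f := by
  unfold indicatorCLM
  rw [dif_pos hA, LinearMap.mkContinuous_apply]
  exact MemLp.coeFn_toLp (f := A.indicator f) ((Lp.memLp f).indicator hA)

lemma Invariant.inter_restrictOp {T : Lp ℝ p μ →L[ℝ] Lp ℝ p μ} {C A : Set Ω}
    (hC : Invariant T C) (hA : MeasurableSet A) :
    Invariant (restrictOp T A) (C ∩ A) := by
  refine ⟨hC.1.inter hA, fun f hf hf0 => ?_⟩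
  have hg : ⇑(indicatorCLM μ p A f) =ᵐ[μ] A.indicator f := indicatorCLM_coeFn hA f
  have hg_nonneg : 0 ≤ indicatorCLM μ p A f := by
    rw [← Lp.coeFn_nonneg]
    filter_upwards [hg, (Lp.coeFn_nonneg f).2 hf] with x hx hfx
    rw [hx]
    exact Set.indicator_apply_nonneg fun _ => hfx
  have hg_supp : ∀ᵐ x ∂μ, x ∉ C → indicatorCLM μ p A f x = 0 := by
    filter_upwards [hg, hf0] with x hx h0 hxC
    rw [hx]
    exact Set.indicator_apply_eq_zero.2 fun hxA => h0 fun h => hxC h.1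
  filter_upwards [indicatorCLM_coeFn (μ := μ) (p := p) hA (T (indicatorCLM μ p A f)),
    hC.2 _ hg_nonneg hg_supp] with x hx hTg hxCA
  rw [restrictOp, ContinuousLinearMap.comp_apply, ContinuousLinearMap.comp_apply, hx]
  exact Set.indicator_apply_eq_zero.2 fun hxA => hTg fun hxC => hxCA ⟨hxC, hxA⟩

lemma Irreducible.ae_le_or_ae_le_compl {T : Lp ℝ p μ →L[ℝ] Lp ℝ p μ} {A C : Set Ω}
    (hA : Irreducible T A) (hC : Invariant T C) : A ≤ᵐ[μ] C ∨ A ≤ᵐ[μ] (Cᶜ : Set Ω) := by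
  rcases hA.2.2 (C ∩ A) (hC.inter_restrictOp hA.1) inter_subset_right.eventuallyLE
    with h0 | heq
  · exact .inr (ae_le_set.2 (by rwa [sdiff_compl, inter_comm]))
  · exact .inl (heq.symm.le.trans inter_subset_left.eventuallyLE)

lemma Invariant.admissible {T : Lp ℝ p μ →L[ℝ] Lp ℝ p μ} {C : Set Ω} (hC : Invariant T C) :
    Admissible T C :=
  MeasurableSpace.measurableSet_generateFrom hC

lemma CoInvariant.admissible {T : Lp ℝ p μ →L[ℝ] Lp ℝ p μ} {C : Set Ω}
    (hC : CoInvariant T C) : Admissible T C :=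
  compl_compl C ▸ (Invariant.admissible hC).compl

lemma atom_of_ae_le_or_ae_le_compl {T : Lp ℝ p μ →L[ℝ] Lp ℝ p μ} {S : Set Ω}
    (hS : Admissible T S) (hS_pos : 0 < μ S)
    (hsplit : ∀ C, Invariant T C → S ≤ᵐ[μ] C ∨ S ≤ᵐ[μ] (Cᶜ : Set Ω)) : Atom T S := by
  refine ⟨hS, hS_pos, fun B hB hBS => ?_⟩
  rcases ae_le_or_ae_le_compl_of_measurableSet_generateFrom hsplit hB with hSB | hSBc
  · exact .inr (hBS.antisymm hSB)
  · left
    simpa only [ae_le_set, sdiff_compl, inter_self] using hBS.trans hSBc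

variable {Ω : Type*} [MeasurableSpace Ω] {μ : MeasureTheory.Measure Ω} {p : ℝ≥0∞}

theorem statement13_general [Fact (1 ≤ p)]
    (T : Lp ℝ p μ →L[ℝ] Lp ℝ p μ)
    (A : Set Ω) (hAirr : Irreducible T A) (FA PA : Set Ω)
    (hFA : IsFuture T A FA) (hPA : IsPast T A PA) :
    Atom T (FA ∩ PA) ∧ A ≤ᵐ[μ] (FA ∩ PA : Set Ω) := by
  obtain ⟨hFA_inv, hA_FA, hFA_min⟩ := hFA
  obtain ⟨hPA_coinv, hA_PA, hPA_min⟩ := hPA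
  have hA_sub : A ≤ᵐ[μ] (FA ∩ PA : Set Ω) := by
    simpa only [inter_self] using ae_le_set_inter hA_FA hA_PA
  refine ⟨atom_of_ae_le_or_ae_le_compl (hFA_inv.admissible.inter hPA_coinv.admissible)
    (hAirr.2.1.trans_le (measure_mono_ae hA_sub)) fun C hC => ?_, hA_sub⟩
  rcases hAirr.ae_le_or_ae_le_compl hC with hAC | hACc
  · exact .inl (inter_subset_left.eventuallyLE.trans (hFA_min C hC hAC))
  · have hCc : CoInvariant T Cᶜ := by rwa [CoInvariant, compl_compl]
    exact .inr (inter_subset_right.eventuallyLE.trans (hPA_min Cᶜ hCc hACc))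

theorem statement13 [SigmaFinite μ] (hμ : μ Set.univ ≠ 0) [Fact (1 ≤ p)]
    (hp : 1 < p) (hp' : p ≠ ∞)
    (T : Lp ℝ p μ →L[ℝ] Lp ℝ p μ) (hT : IsPositiveOp T)
    (A : Set Ω) (hAirr : Irreducible T A) (FA PA : Set Ω)
    (hFA : IsFuture T A FA) (hPA : IsPast T A PA) :
    Atom T (FA ∩ PA) ∧ A ≤ᵐ[μ] (FA ∩ PA : Set Ω) :=
  statement13_general T A hAirr FA PA hFA hPA

end PaperAtoms
end
end
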